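/- arXiv:1506.07990 — 3 statements merged into one kernel-verified Lean document; each statement's English description precedes it below -/
import Mathlib

section
/- Let M = (W, ≥, V) be a plausibility model and R any binary relation on W. Then the derived relation ≥ₐᴿ is transitive. -/
/-- The set of `r`-minimal elements of `Y`. -/
def MinSet {X : Type*} (r : X → X → Prop) (Y : Set X) : Set X :=
  {y ∈ Y | ∀ y' ∈ Y, r y' y}

/-- The lifting of `r` to sets: `Y ⊵ Z` iff `y ⊵ z` for all `y ∈ Y`, `z ∈ Z`. -/
def SetGE {X : Type*} (r : X → X → Prop) (Y Z : Set X) : Prop :=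
  ∀ y ∈ Y, ∀ z ∈ Z, r y z

/-- A plausibility model: a set `W` of worlds, for each agent a plausibility relation
`ge a` that is a well-preorder on each connected component of its symmetric closure,
and a valuation. -/
structure PlausibilityModel (W Agent Prp : Type*) where
  /-- the plausibility relation of each agent -/
  ge : Agent → W → W → Prop
  /-- the valuation -/
  val : W → Set Prp
  refl : ∀ a w, ge a w w
  trans : ∀ a w v u, ge a w v → ge a v u → ge a w u
  /-- every non-empty subset of a `∼ₐ`-equivalence class has minimal elements -/
  min_exists : ∀ a w (Y : Set W), Y ⊆ {v | ge a w v ∨ ge a v w} → Y.Nonempty →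
    (MinSet (ge a) Y).Nonempty

variable {W Agent Prp : Type*}

/-- The epistemic relation `∼ₐ`: the symmetric closure of `≥ₐ`. -/
def PlausibilityModel.sim (M : PlausibilityModel W Agent Prp) (a : Agent) (w v : W) : Prop :=
  M.ge a w v ∨ M.ge a v w

/-- The `∼ₐ`-equivalence class `[w]ₐ`. -/
def PlausibilityModel.simClass (M : PlausibilityModel W Agent Prp) (a : Agent) (w : W) : Set W :=
  {v | M.sim a w v}

/-- The derived relation `w ≥ₐᴿ v` iff
`Min_a([w]_{R⁼} ∩ [w]ₐ) ≥ₐ Min_a([v]_{R⁼} ∩ [v]ₐ)`, where `R⁼` is the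
equivalence closure of `R`. -/
def PlausibilityModel.geR (M : PlausibilityModel W Agent Prp) (a : Agent)
    (R : W → W → Prop) (w v : W) : Prop :=
  SetGE (M.ge a)
    (MinSet (M.ge a) ({x | Relation.EqvGen R w x} ∩ M.simClass a w))
    (MinSet (M.ge a) ({x | Relation.EqvGen R v x} ∩ M.simClass a v))

/-- The derived relation `≥ₐᴿ` is transitive. -/
theorem geR_trans (M : PlausibilityModel W Agent Prp) (a : Agent)
    (R : W → W → Prop) :
    ∀ w v u : W, M.geR a R w v → M.geR a R v u → M.geR a R w u := by
  intro w v u h1 h2 y hy z hz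
  obtain ⟨m, hm⟩ := M.min_exists a v ({x | Relation.EqvGen R v x} ∩ M.simClass a v)
    (fun x hx => hx.2) ⟨v, Relation.EqvGen.refl v, Or.inl (M.refl a v)⟩
  exact M.trans a y m z (h1 y hy m hm) (h2 m hm z hz)
end

section
/- Let M = (W, ≥, V) be a plausibility model and R any binary relation on W. Then every non-empty subset of any ∼ₐ-equivalence class has ≥ₐᴿ-minimal elements. Hence ≥ₐᴿ is a well-preorder on each ∼ₐ-equivalence class. -/
variable {W Agent Prp : Type*}

/-- Every non-empty subset of a `∼ₐ`-equivalence class has `≥ₐᴿ`-minimal elements;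
together with reflexivity and transitivity, `≥ₐᴿ` is a well-preorder on each
`∼ₐ`-equivalence class. -/
theorem geR_wellPreorder (M : PlausibilityModel W Agent Prp) (a : Agent)
    (R : W → W → Prop) :
    (∀ (w : W) (Y : Set W), Y ⊆ M.simClass a w → Y.Nonempty →
      (MinSet (M.geR a R) Y).Nonempty) ∧
    (∀ w : W, M.geR a R w w) ∧
    (∀ w v u : W, M.geR a R w v → M.geR a R v u → M.geR a R w u) := by
  -- abbreviation for the set `[w]_{R⁼} ∩ [w]ₐ`
  set S : W → Set W := fun v => {x | Relation.EqvGen R v x} ∩ M.simClass a v with hS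
  have hself : ∀ v : W, v ∈ S v := fun v =>
    ⟨Relation.EqvGen.refl v, Or.inl (M.refl a v)⟩
  have minS : ∀ v : W, (MinSet (M.ge a) (S v)).Nonempty := by
    intro v
    exact M.min_exists a v (S v) (fun x hx => hx.2) ⟨v, hself v⟩
  -- any two elements of a `∼ₐ`-class are `∼ₐ`-related
  have comp : ∀ w v u : W, M.sim a w v → M.sim a w u → M.sim a v u := by
    intro w v u hv hu
    obtain ⟨m, hmem, hmin⟩ := M.min_exists a w {v, u}
      (by intro x hx; rcases hx with rfl | rfl
          · exact hv
          · exact hu)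
      ⟨v, by simp⟩
    rcases hmem with rfl | rfl
    · exact Or.inr (hmin u (by simp))
    · exact Or.inl (hmin v (by simp))
  have simtrans : ∀ w v u : W, M.sim a w v → M.sim a v u → M.sim a w u := by
    intro w v u h1 h2
    exact comp v w u (Or.symm h1) h2
  refine ⟨?_, ?_, ?_⟩
  · -- minimal elements exist
    intro w Y hYsub hYne
    classical
    set T : Set W := ⋃ y ∈ Y, MinSet (M.ge a) (S y) with hT
    have hTsub : T ⊆ M.simClass a w := by
      intro x hx
      simp only [hT, Set.mem_iUnion] at hx
      obtain ⟨y, hy, hxm⟩ := hx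
      exact simtrans w y x (hYsub hy) hxm.1.2
    have hTne : T.Nonempty := by
      obtain ⟨y, hy⟩ := hYne
      obtain ⟨m, hm⟩ := minS y
      exact ⟨m, Set.mem_biUnion hy hm⟩
    obtain ⟨t, htT, htmin⟩ := M.min_exists a w T hTsub hTne
    simp only [hT, Set.mem_iUnion] at htT
    obtain ⟨y₀, hy₀, htm⟩ := htT
    refine ⟨y₀, hy₀, ?_⟩
    intro y' hy' p hp q hq
    have h1 : M.ge a p t := htmin p (Set.mem_biUnion hy' hp)
    have h2 : M.ge a t q := hq.2 t htm.1
    exact M.trans a p t q h1 h2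
  · -- reflexivity
    intro w p hp q hq
    exact hq.2 p hp.1
  · -- transitivity
    intro w v u h1 h2 p hp q hq
    obtain ⟨m, hm⟩ := minS v
    exact M.trans a p m q (h1 p hp m hm) (h2 m hm q hq)
end

section
/- In a plausibility model with finite ∼ₐ-equivalence classes, layers do not skip: if the n-th layer Eⁿₐ[w]ₐ and the (n+2)-nd layer Eⁿ⁺²ₐ[w]ₐ are both non-empty, then the (n+1)-st layer Eⁿ⁺¹ₐ[w]ₐ is non-empty. -/
/-- Belief spheres inside an equivalence class `C` with respect to a well-preorder `r`:
`sphere r C 0 = Min_r C`; `sphere r C (n+1) = C` if `sphere r C n = C`, and otherwise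
`sphere r C n ∪ Min_r (C \ sphere r C n)`. -/
noncomputable def sphere {X : Type*} (r : X → X → Prop) (C : Set X) : ℕ → Set X
  | 0 => MinSet r C
  | n + 1 =>
    letI := Classical.propDecidable (sphere r C n = C)
    if sphere r C n = C then C else sphere r C n ∪ MinSet r (C \ sphere r C n)

/-- The `n`-th belief layer: `E⁰ = Min_r C` and `Eⁿ⁺¹ = Min_r (C \ sphere r C n)`. -/
noncomputable def layer {X : Type*} (r : X → X → Prop) (C : Set X) : ℕ → Set X
  | 0 => MinSet r C
  | n + 1 => MinSet r (C \ sphere r C n)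


lemma sphere_subset {X : Type*} (r : X → X → Prop) (C : Set X) (n : ℕ) :
    sphere r C n ⊆ C := by
  induction n with
  | zero => exact fun x hx => hx.1
  | succ n ih =>
      simp only [sphere]
      split
      · exact fun x hx => hx
      · rintro x (hx | hx)
        · exact ih hx
        · exact hx.1.1

/-- Layers do not skip: if layers `n` and `n+2` are non-empty, so is layer `n+1`. -/
theorem layer_no_skip {X : Type*} (r : X → X → Prop) (C : Set X)
    (hrefl : ∀ x ∈ C, r x x)
    (htrans : ∀ x ∈ C, ∀ y ∈ C, ∀ z ∈ C, r x y → r y z → r x z)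
    (hmin : ∀ Y : Set X, Y ⊆ C → Y.Nonempty → (MinSet r Y).Nonempty)
    (hfin : C.Finite) (n : ℕ)
    (h1 : (layer r C n).Nonempty) (h2 : (layer r C (n + 2)).Nonempty) :
    (layer r C (n + 1)).Nonempty := by
  obtain ⟨x, hx⟩ := h2
  have hx' : x ∈ C \ sphere r C (n + 1) := hx.1
  have hne : sphere r C n ≠ C := by
    intro h
    apply hx'.2
    simp only [sphere, h, if_pos rfl]
    exact hx'.1
  have hsub := sphere_subset r C n
  have hnonempty : (C \ sphere r C n).Nonempty := by
    rcases Set.exists_of_ssubset (lt_of_le_of_ne hsub hne) with ⟨y, hyC, hyn⟩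
    exact ⟨y, hyC, hyn⟩
  exact hmin _ Set.diff_subset hnonempty
end
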